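/- Let x be a random vector in ℝ^d with E[xxᵀ] = Σ₀, ‖Σ₀‖ ≤ C₁, satisfying L4-L2 hypercontractivity E[(x·u)⁴] ≤ C (E[(x·u)²])² for all u ∈ ℝ^d. Let η be independent of x with E[η] = 0, and y = w₀·x + η. For w ∈ ℝ^d, κ > 0, and ε > 0, if κ² ≥ 8 C C₁ E[(y − x·w)²]/ε, then ‖E[(x·w − y)/max(|x·w − y|, κ)·κ·x − (x·w − y)x]‖ ≤ ε ‖w − w₀‖. -/

import Mathlib

open MeasureTheory ProbabilityTheory Matrix
open scoped RealInnerProductSpace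

noncomputable def opNorm {d : ℕ} (M : Matrix (Fin d) (Fin d) ℝ) : ℝ :=
  ‖Matrix.toEuclideanCLM (𝕜 := ℝ) M‖

/-- The clipped gradient `g = (x·w − y)/max(|x·w − y|, κ) · κ · x` of the squared loss. -/
noncomputable def clipGrad {Ω : Type*} {d : ℕ} (x : Ω → EuclideanSpace ℝ (Fin d))
    (y : Ω → ℝ) (w : EuclideanSpace ℝ (Fin d)) (κ : ℝ) (ω : Ω) :
    EuclideanSpace ℝ (Fin d) :=
  ((⟪x ω, w⟫ - y ω) / max |⟪x ω, w⟫ - y ω| κ * κ) • x ω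

/-!
Write `ψ = clipError κ` (clipped minus unclipped residual), `Δ = w - w₀` and `a = ⟪x, Δ⟫`, so
that the bias is `E[ψ(a - η) x]`. As `ψ` is odd and `η` is symmetric and independent of `x`,
`E[ψ(-η) x] = 0`, so `ψ(-η)` may be subtracted. The difference `ψ(a - η) - ψ(-η)` is at most `|a|`
(`ψ` is 1-Lipschitz) and vanishes unless some clipping happens, which forces
`κ² ≤ 2a² + 3η²`; hence it is at most `|a| (2a² + 3η²) / κ²`. Testing the bias against a
direction `u`, Cauchy–Schwarz and hypercontractivity bound the resulting third moments by
`(2C E[a²] + 3E[η²]) √(E[a²] E[⟪x, u⟫²]) / κ²`, and `E[a²] + E[η²] = E[(y - ⟪x, w⟫)²]`,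
`E[⟪x, v⟫²] ≤ ‖Σ₀‖ ‖v‖²` turn this into `ε ‖Δ‖ ‖u‖`.
-/

noncomputable def clipError (κ t : ℝ) : ℝ := t / max |t| κ * κ - t

section clipError

variable {κ : ℝ}

lemma clipError_eq (hκ : 0 < κ) (t : ℝ) : clipError κ t = max (-κ) (min t κ) - t := by
  unfold clipError
  rcases le_or_gt |t| κ with h | h
  · obtain ⟨h₁, h₂⟩ := abs_le.1 h
    rw [max_eq_right h, div_mul_cancel₀ _ hκ.ne', min_eq_left h₂, max_eq_right h₁]
  · rw [max_eq_left h.le]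
    rcases lt_abs.1 h with h' | h'
    · rw [abs_of_pos (hκ.trans h'), div_self (hκ.trans h').ne', one_mul, min_eq_right h'.le,
        max_eq_right (by linarith)]
    · rw [abs_of_neg (by linarith), div_neg, div_self (by linarith), min_eq_left (by linarith),
        max_eq_left (by linarith)]
      ring

lemma clipError_of_abs_le (hκ : 0 < κ) {t : ℝ} (ht : |t| ≤ κ) : clipError κ t = 0 := by
  obtain ⟨h₁, h₂⟩ := abs_le.1 ht
  rw [clipError_eq hκ, min_eq_left h₂, max_eq_right h₁, sub_self]

lemma clipError_neg (t : ℝ) : clipError κ (-t) = -clipError κ t := by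
  simp only [clipError, abs_neg, neg_div]
  ring

lemma abs_clipError_sub_le (hκ : 0 < κ) (p q : ℝ) :
    |clipError κ p - clipError κ q| ≤ |p - q| := by
  rw [clipError_eq hκ, clipError_eq hκ, abs_le]
  have := le_abs_self (p - q)
  have := neg_abs_le (p - q)
  constructor <;> simp only [min_def, max_def] <;> split_ifs <;> linarith

lemma abs_clipError_le (hκ : 0 < κ) (t : ℝ) : |clipError κ t| ≤ |t| := by
  simpa [clipError_of_abs_le hκ (abs_zero.trans_le hκ.le)] using abs_clipError_sub_le hκ t 0

lemma continuous_clipError (hκ : 0 < κ) : Continuous (clipError κ) :=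
  LipschitzWith.continuous (K := 1) <| .of_dist_le_mul fun p q => by
    simpa [Real.dist_eq] using abs_clipError_sub_le hκ p q

lemma abs_clipError_sub_clipError_neg_le (hκ : 0 < κ) (a e : ℝ) :
    |clipError κ (a - e) - clipError κ (-e)| ≤ |a| * (2 * a ^ 2 + 3 * e ^ 2) / κ ^ 2 := by
  by_cases hin : |a - e| ≤ κ ∧ |e| ≤ κ
  · rw [clipError_of_abs_le hκ hin.1, clipError_of_abs_le hκ (by rw [abs_neg]; exact hin.2),
      sub_self, abs_zero]
    positivity
  have hκ2 : κ ^ 2 ≤ 2 * a ^ 2 + 3 * e ^ 2 := by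
    rw [not_and_or, not_le, not_le] at hin
    rcases hin with h | h
    · nlinarith [sq_abs (a - e), sq_nonneg (a + e)]
    · nlinarith [sq_abs e, sq_nonneg a]
  have hlip : |clipError κ (a - e) - clipError κ (-e)| ≤ |a| := by
    simpa using abs_clipError_sub_le hκ (a - e) (-e)
  rw [le_div_iff₀ (by positivity)]
  calc _ ≤ |a| * κ ^ 2 := by gcongr
    _ ≤ _ := by gcongr

end clipError

instance : ENNReal.HolderTriple 4 4 2 :=
  ⟨by rw [← two_mul, show (4 : ENNReal) = 2 * 2 by norm_num, ENNReal.mul_inv (by simp) (by simp),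
    ← mul_assoc, ENNReal.mul_inv_cancel (by simp) (by simp), one_mul]⟩

section Moments

variable {Ω : Type*} [MeasurableSpace Ω] {μ : Measure Ω} {a b f g : Ω → ℝ}

lemma memLp_sq_of_memLp_four (ha : MemLp a 4 μ) : MemLp (fun ω => a ω ^ 2) 2 μ := by
  simpa [pow_two] using ha.mul' ha

lemma integral_mul_le_sqrt_mul_sqrt (hf₀ : 0 ≤ᵐ[μ] f) (hg₀ : 0 ≤ᵐ[μ] g) (hf : MemLp f 2 μ)
    (hg : MemLp g 2 μ) :
    ∫ ω, f ω * g ω ∂μ ≤ √(∫ ω, f ω ^ 2 ∂μ) * √(∫ ω, g ω ^ 2 ∂μ) := by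
  have h := integral_mul_le_Lp_mul_Lq_of_nonneg Real.HolderConjugate.two_two hf₀ hg₀
    (by simpa using hf) (by simpa using hg)
  norm_num [Real.sqrt_eq_rpow] at h ⊢
  exact h

lemma integral_abs_mul_le (ha : MemLp a 2 μ) (hb : MemLp b 2 μ) :
    ∫ ω, |a ω * b ω| ∂μ ≤ √((∫ ω, a ω ^ 2 ∂μ) * ∫ ω, b ω ^ 2 ∂μ) := by
  rw [Real.sqrt_mul (integral_nonneg fun ω => sq_nonneg _)]
  simpa [abs_mul] using integral_mul_le_sqrt_mul_sqrt (.of_forall fun ω => abs_nonneg (a ω))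
    (.of_forall fun ω => abs_nonneg (b ω)) ha.abs hb.abs

lemma integral_sq_mul_sq_le {C : ℝ} (hC : 0 ≤ C) (ha : MemLp a 4 μ) (hb : MemLp b 4 μ)
    (hha : ∫ ω, a ω ^ 4 ∂μ ≤ C * (∫ ω, a ω ^ 2 ∂μ) ^ 2)
    (hhb : ∫ ω, b ω ^ 4 ∂μ ≤ C * (∫ ω, b ω ^ 2 ∂μ) ^ 2) :
    ∫ ω, a ω ^ 2 * b ω ^ 2 ∂μ ≤ C * (∫ ω, a ω ^ 2 ∂μ) * ∫ ω, b ω ^ 2 ∂μ := by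
  set P := ∫ ω, a ω ^ 2 ∂μ
  set Q := ∫ ω, b ω ^ 2 ∂μ
  have hP : 0 ≤ P := integral_nonneg fun ω => sq_nonneg _
  have hQ : 0 ≤ Q := integral_nonneg fun ω => sq_nonneg _
  calc ∫ ω, a ω ^ 2 * b ω ^ 2 ∂μ
      ≤ √(∫ ω, a ω ^ 4 ∂μ) * √(∫ ω, b ω ^ 4 ∂μ) := by
        simpa [← pow_mul] using integral_mul_le_sqrt_mul_sqrt
          (.of_forall fun ω => sq_nonneg (a ω)) (.of_forall fun ω => sq_nonneg (b ω))
          (memLp_sq_of_memLp_four ha) (memLp_sq_of_memLp_four hb)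
    _ ≤ √(C * P ^ 2) * √(C * Q ^ 2) := by gcongr
    _ = C * P * Q := by
        rw [← Real.sqrt_mul (by positivity), show C * P ^ 2 * (C * Q ^ 2) = (C * P * Q) ^ 2 by ring,
          Real.sqrt_sq (by positivity)]

lemma integral_sq_mul_abs_mul_le {C : ℝ} (hC : 0 ≤ C) (ha : MemLp a 4 μ) (hb : MemLp b 4 μ)
    (hha : ∫ ω, a ω ^ 4 ∂μ ≤ C * (∫ ω, a ω ^ 2 ∂μ) ^ 2)
    (hhb : ∫ ω, b ω ^ 4 ∂μ ≤ C * (∫ ω, b ω ^ 2 ∂μ) ^ 2) :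
    ∫ ω, a ω ^ 2 * |a ω * b ω| ∂μ ≤
      C * (∫ ω, a ω ^ 2 ∂μ) * √((∫ ω, a ω ^ 2 ∂μ) * ∫ ω, b ω ^ 2 ∂μ) := by
  set P := ∫ ω, a ω ^ 2 ∂μ
  set Q := ∫ ω, b ω ^ 2 ∂μ
  have hP : 0 ≤ P := integral_nonneg fun ω => sq_nonneg _
  have hQ : 0 ≤ Q := integral_nonneg fun ω => sq_nonneg _
  calc ∫ ω, a ω ^ 2 * |a ω * b ω| ∂μ
      ≤ √(∫ ω, a ω ^ 4 ∂μ) * √(∫ ω, a ω ^ 2 * b ω ^ 2 ∂μ) := by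
        simpa [← pow_mul, mul_pow] using integral_mul_le_sqrt_mul_sqrt
          (.of_forall fun ω => sq_nonneg (a ω)) (.of_forall fun ω => abs_nonneg (a ω * b ω))
          (memLp_sq_of_memLp_four ha) (hb.mul' (r := 2) ha).abs
    _ ≤ √(C * P ^ 2) * √(C * P * Q) := by
        gcongr
        exact integral_sq_mul_sq_le hC ha hb hha hhb
    _ = C * P * √(P * Q) := by
        rw [← Real.sqrt_mul (by positivity), show C * P ^ 2 * (C * P * Q) = (C * P) ^ 2 * (P * Q)
          by ring, Real.sqrt_mul (by positivity), Real.sqrt_sq (by positivity)]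

end Moments

section Noise

variable {Ω : Type*} [MeasurableSpace Ω] {μ : Measure Ω} {a b η : Ω → ℝ}

lemma integral_comp_eq_zero_of_map_neg_eq {f : ℝ → ℝ} (hf : Measurable f)
    (hodd : ∀ t, f (-t) = -f t) (hη : AEMeasurable η μ)
    (hsym : μ.map η = μ.map (fun ω => -η ω)) :
    ∫ ω, f (η ω) ∂μ = 0 := by
  have h : ∫ ω, f (η ω) ∂μ = ∫ ω, f (-η ω) ∂μ := by
    rw [← integral_map hη hf.aestronglyMeasurable, hsym,
      integral_map (φ := fun ω => -η ω) hη.neg hf.aestronglyMeasurable]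
  simp only [hodd, integral_neg] at h
  linarith

variable {κ : ℝ}

lemma integral_clipError_neg_mul_eq_zero (hκ : 0 < κ) (hb : AEStronglyMeasurable b μ)
    (hη : AEStronglyMeasurable η μ) (hind : IndepFun b η μ)
    (hsym : μ.map η = μ.map (fun ω => -η ω)) :
    ∫ ω, clipError κ (-η ω) * b ω ∂μ = 0 := by
  have hclip : Measurable fun t => clipError κ (-t) :=
    (continuous_clipError hκ).measurable.comp measurable_neg
  have hodd : ∫ ω, clipError κ (-η ω) ∂μ = 0 :=
    integral_comp_eq_zero_of_map_neg_eq (f := fun t => clipError κ (-t)) hclip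
      (fun t => by simp [clipError_neg]) hη.aemeasurable hsym
  have hind' : IndepFun (fun ω => clipError κ (-η ω)) b μ := (hind.comp measurable_id hclip).symm
  rw [hind'.integral_fun_mul_eq_mul_integral
    (hclip.comp_aemeasurable hη.aemeasurable).aestronglyMeasurable hb, hodd, zero_mul]

lemma integral_clipError_mul_eq (hκ : 0 < κ) (ha : MemLp a 2 μ) (hb : MemLp b 2 μ)
    (hη : MemLp η 2 μ) (hind : IndepFun b η μ) (hsym : μ.map η = μ.map (fun ω => -η ω)) :
    ∫ ω, clipError κ (a ω - η ω) * b ω ∂μ =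
      ∫ ω, (clipError κ (a ω - η ω) - clipError κ (-η ω)) * b ω ∂μ := by
  have hclip := continuous_clipError hκ
  have hD : Integrable (fun ω => (clipError κ (a ω - η ω) - clipError κ (-η ω)) * b ω) μ := by
    refine (ha.integrable_mul hb).abs.mono' ((hclip.comp_aestronglyMeasurable (ha.1.sub hη.1)).sub
      (hclip.comp_aestronglyMeasurable hη.1.neg) |>.mul hb.1) (.of_forall fun ω => ?_)
    rw [Real.norm_eq_abs, Pi.mul_apply, abs_mul, abs_mul]
    exact mul_le_mul_of_nonneg_right (by simpa using abs_clipError_sub_le hκ (a ω - η ω) (-η ω))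
      (abs_nonneg _)
  have hN : Integrable (fun ω => clipError κ (-η ω) * b ω) μ := by
    refine (hη.integrable_mul hb).abs.mono' ((hclip.comp_aestronglyMeasurable hη.1.neg).mul hb.1)
      (.of_forall fun ω => ?_)
    rw [Real.norm_eq_abs, Pi.mul_apply, abs_mul, abs_mul]
    exact mul_le_mul_of_nonneg_right (by simpa using abs_clipError_le hκ (-η ω)) (abs_nonneg _)
  have hsum := integral_add hD hN
  rw [integral_clipError_neg_mul_eq_zero hκ hb.1 hη.1 hind hsym, add_zero] at hsum
  rw [← hsum]
  simp [sub_mul]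

variable [IsProbabilityMeasure μ]

lemma integral_sub_sq_of_indepFun (ha : MemLp a 2 μ) (hη : MemLp η 2 μ) (hind : IndepFun a η μ)
    (hη₀ : ∫ ω, η ω ∂μ = 0) :
    ∫ ω, (a ω - η ω) ^ 2 ∂μ = ∫ ω, a ω ^ 2 ∂μ + ∫ ω, η ω ^ 2 ∂μ := by
  have ha₁ := ha.integrable one_le_two
  have hη₁ := hη.integrable one_le_two
  have hcross : ∫ ω, a ω * η ω ∂μ = 0 := by
    rw [hind.integral_fun_mul_eq_mul_integral ha₁.1 hη₁.1, hη₀, mul_zero]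
  have hint : Integrable (fun ω => a ω * η ω) μ := hind.integrable_mul ha₁ hη₁
  have hsq : Integrable (fun ω => a ω ^ 2 - 2 * (a ω * η ω)) μ :=
    ha.integrable_sq.sub (hint.const_mul 2)
  simp_rw [sub_sq, mul_assoc]
  rw [integral_add hsq hη.integrable_sq, integral_sub ha.integrable_sq (hint.const_mul 2),
    integral_const_mul, hcross, mul_zero, sub_zero]

lemma abs_integral_clipError_mul_le {C : ℝ} (hC : 0 ≤ C) (hκ : 0 < κ)
    (ha : MemLp a 4 μ) (hb : MemLp b 4 μ) (hη : MemLp η 2 μ)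
    (hind : IndepFun (fun ω => (a ω, b ω)) η μ) (hsym : μ.map η = μ.map (fun ω => -η ω))
    (hha : ∫ ω, a ω ^ 4 ∂μ ≤ C * (∫ ω, a ω ^ 2 ∂μ) ^ 2)
    (hhb : ∫ ω, b ω ^ 4 ∂μ ≤ C * (∫ ω, b ω ^ 2 ∂μ) ^ 2) :
    |∫ ω, clipError κ (a ω - η ω) * b ω ∂μ| ≤
      (2 * C * ∫ ω, a ω ^ 2 ∂μ + 3 * ∫ ω, η ω ^ 2 ∂μ) *
        √((∫ ω, a ω ^ 2 ∂μ) * ∫ ω, b ω ^ 2 ∂μ) / κ ^ 2 := by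
  have ha₂ : MemLp a 2 μ := ha.mono_exponent (by norm_num)
  have hb₂ : MemLp b 2 μ := hb.mono_exponent (by norm_num)
  have habη : IndepFun (fun ω => |a ω * b ω|) (fun ω => η ω ^ 2) μ :=
    hind.comp (measurable_fst.mul measurable_snd).abs (measurable_id.pow_const 2)
  have hab : Integrable (fun ω => |a ω * b ω|) μ := (ha₂.integrable_mul hb₂).abs
  have hI₁ : Integrable (fun ω => a ω ^ 2 * |a ω * b ω|) μ :=
    (memLp_sq_of_memLp_four ha).integrable_mul (hb.mul' (r := 2) ha).abs
  have hI₂ : Integrable (fun ω => |a ω * b ω| * η ω ^ 2) μ :=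
    habη.integrable_mul hab hη.integrable_sq
  have hpt : ∀ ω, |(clipError κ (a ω - η ω) - clipError κ (-η ω)) * b ω| ≤
      (2 * (a ω ^ 2 * |a ω * b ω|) + 3 * (|a ω * b ω| * η ω ^ 2)) / κ ^ 2 := fun ω => by
    calc _ ≤ |a ω| * (2 * a ω ^ 2 + 3 * η ω ^ 2) / κ ^ 2 * |b ω| := by
          rw [abs_mul]
          exact mul_le_mul_of_nonneg_right (abs_clipError_sub_clipError_neg_le hκ _ _)
            (abs_nonneg _)
      _ = _ := by rw [abs_mul]; ring
  rw [integral_clipError_mul_eq hκ ha₂ hb₂ hη (hind.comp measurable_snd measurable_id) hsym]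
  calc _ ≤ ∫ ω, |(clipError κ (a ω - η ω) - clipError κ (-η ω)) * b ω| ∂μ :=
        abs_integral_le_integral_abs
    _ ≤ ∫ ω, (2 * (a ω ^ 2 * |a ω * b ω|) + 3 * (|a ω * b ω| * η ω ^ 2)) / κ ^ 2 ∂μ :=
        integral_mono_of_nonneg (.of_forall fun ω => abs_nonneg _)
          (((hI₁.const_mul 2).add (hI₂.const_mul 3)).div_const _) (.of_forall hpt)
    _ = (2 * ∫ ω, a ω ^ 2 * |a ω * b ω| ∂μ +
          3 * ((∫ ω, |a ω * b ω| ∂μ) * ∫ ω, η ω ^ 2 ∂μ)) / κ ^ 2 := by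
        rw [integral_div, integral_add (hI₁.const_mul 2) (hI₂.const_mul 3), integral_const_mul,
          integral_const_mul, habη.integral_fun_mul_eq_mul_integral hab.1 hη.integrable_sq.1]
    _ ≤ (2 * (C * (∫ ω, a ω ^ 2 ∂μ) * √((∫ ω, a ω ^ 2 ∂μ) * ∫ ω, b ω ^ 2 ∂μ)) +
          3 * (√((∫ ω, a ω ^ 2 ∂μ) * ∫ ω, b ω ^ 2 ∂μ) * ∫ ω, η ω ^ 2 ∂μ)) / κ ^ 2 := by
        gcongr
        · exact integral_sq_mul_abs_mul_le hC ha hb hha hhb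
        · exact integral_abs_mul_le ha₂ hb₂
    _ = _ := by ring

end Noise

lemma integral_inner_sq_le_opNorm {Ω : Type*} [MeasurableSpace Ω] {μ : Measure Ω}
    {d : ℕ} {x : Ω → EuclideanSpace ℝ (Fin d)} (hx : MemLp x 2 μ)
    {A : Matrix (Fin d) (Fin d) ℝ} (hA : ∀ i j, ∫ ω, x ω i * x ω j ∂μ = A i j)
    (v : EuclideanSpace ℝ (Fin d)) :
    ∫ ω, ⟪x ω, v⟫ ^ 2 ∂μ ≤ opNorm A * ‖v‖ ^ 2 := by
  have hint : ∀ i j, Integrable (fun ω => v i * v j * (x ω i * x ω j)) μ := fun i j => by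
    have hx_coord : ∀ i, MemLp (fun ω => x ω i) 2 μ := fun i => by
      simpa [EuclideanSpace.inner_single_right] using
        hx.inner_const (𝕜 := ℝ) (EuclideanSpace.single i (1 : ℝ))
    exact ((hx_coord i).integrable_mul (hx_coord j)).const_mul _
  have hquad : ∫ ω, ⟪x ω, v⟫ ^ 2 ∂μ = ⟪Matrix.toEuclideanCLM (𝕜 := ℝ) A v, v⟫ := by
    calc ∫ ω, ⟪x ω, v⟫ ^ 2 ∂μ = ∫ ω, ∑ i, ∑ j, v i * v j * (x ω i * x ω j) ∂μ := by
          congr with ω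
          simp only [PiLp.inner_apply, RCLike.inner_apply, conj_trivial, sq, Finset.sum_mul_sum]
          exact Finset.sum_congr rfl fun i _ => Finset.sum_congr rfl fun j _ => by ring
      _ = ∑ i, ∑ j, v i * v j * A i j := by
          rw [integral_finsetSum _ fun i _ => integrable_finsetSum _ fun j _ => hint i j]
          refine Finset.sum_congr rfl fun i _ => ?_
          rw [integral_finsetSum _ fun j _ => hint i j]
          simp_rw [integral_const_mul, hA]
      _ = _ := by
          simp only [ofLp_toEuclideanCLM, PiLp.inner_apply, RCLike.inner_apply, conj_trivial,
            Matrix.mulVec, dotProduct, Finset.mul_sum]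
          exact Finset.sum_congr rfl fun i _ => Finset.sum_congr rfl fun j _ => by ring
  calc ∫ ω, ⟪x ω, v⟫ ^ 2 ∂μ ≤ ‖Matrix.toEuclideanCLM (𝕜 := ℝ) A v‖ * ‖v‖ :=
        hquad ▸ real_inner_le_norm _ _
    _ ≤ opNorm A * ‖v‖ * ‖v‖ := by gcongr; exact (Matrix.toEuclideanCLM (𝕜 := ℝ) A).le_opNorm v
    _ = opNorm A * ‖v‖ ^ 2 := by ring

lemma mul_sqrt_mul_div_sq_le {C L P Q E κ ε s t : ℝ} (hC : 1 ≤ C) (hL : 0 ≤ L) (hP : 0 ≤ P)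
    (hQ : 0 ≤ Q) (hE : 0 ≤ E) (hκ : 0 < κ) (hs : 0 ≤ s) (ht : 0 ≤ t) (hPs : P ≤ L * s ^ 2)
    (hQt : Q ≤ L * t ^ 2) (hκε : 8 * C * L * (P + E) ≤ ε * κ ^ 2) :
    (2 * C * P + 3 * E) * √(P * Q) / κ ^ 2 ≤ ε * s * t := by
  have hsqrt : √(P * Q) ≤ L * s * t := by
    refine Real.sqrt_le_iff.2 ⟨by positivity, ?_⟩
    calc P * Q ≤ L * s ^ 2 * (L * t ^ 2) := mul_le_mul hPs hQt hQ (by positivity)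
      _ = _ := by ring
  have hCL : 0 ≤ C * L * (P + E) * (s * t) := by
    have := hC; positivity
  rw [div_le_iff₀ (by positivity)]
  calc (2 * C * P + 3 * E) * √(P * Q) ≤ 5 * C * (P + E) * (L * s * t) :=
        mul_le_mul (by nlinarith) hsqrt (Real.sqrt_nonneg _) (by positivity)
    _ ≤ ε * s * t * κ ^ 2 := by
        nlinarith [mul_le_mul_of_nonneg_right hκε (by positivity : 0 ≤ s * t)]

lemma clipGrad_sub_smul_eq {Ω : Type*} {d : ℕ} (x : Ω → EuclideanSpace ℝ (Fin d)) (y : Ω → ℝ)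
    (w : EuclideanSpace ℝ (Fin d)) (κ : ℝ) (ω : Ω) :
    clipGrad x y w κ ω - (⟪x ω, w⟫ - y ω) • x ω = clipError κ (⟪x ω, w⟫ - y ω) • x ω := by
  simp only [clipGrad, clipError, sub_smul]

theorem clipGrad_bias_general {Ω : Type*} [MeasurableSpace Ω] (μ : Measure Ω)
    [IsProbabilityMeasure μ] {d : ℕ}
    (x : Ω → EuclideanSpace ℝ (Fin d)) (η : Ω → ℝ) (y : Ω → ℝ)
    (hx : MemLp x 4 μ) (hη : MemLp η 2 μ)
    (hind : IndepFun x η μ)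
    (hη0 : ∫ ω, η ω ∂μ = 0)
    (hηsym : Measure.map η μ = Measure.map (fun ω => -η ω) μ)
    (w₀ w : EuclideanSpace ℝ (Fin d))
    (hy : ∀ ω, y ω = ⟪x ω, w₀⟫ + η ω)
    (A : Matrix (Fin d) (Fin d) ℝ)
    (hA : ∀ i j, ∫ ω, x ω i * x ω j ∂μ = A i j)
    (C C₁ : ℝ) (hC : 1 ≤ C) (hAn : opNorm A ≤ C₁)
    (hyper : ∀ u : EuclideanSpace ℝ (Fin d),
      ∫ ω, ⟪x ω, u⟫ ^ 4 ∂μ ≤ C * (∫ ω, ⟪x ω, u⟫ ^ 2 ∂μ) ^ 2)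
    (κ ε : ℝ) (hκpos : 0 < κ) (hε : 0 < ε)
    (hκ : 8 * C * C₁ * (∫ ω, (y ω - ⟪x ω, w⟫) ^ 2 ∂μ) / ε ≤ κ ^ 2)
    (hint₁ : Integrable (clipGrad x y w κ) μ)
    (hint₂ : Integrable (fun ω => (⟪x ω, w⟫ - y ω) • x ω) μ) :
    ‖∫ ω, (clipGrad x y w κ ω - (⟪x ω, w⟫ - y ω) • x ω) ∂μ‖ ≤ ε * ‖w - w₀‖ := by
  set Δ := w - w₀
  have hr : ∀ ω, ⟪x ω, w⟫ - y ω = ⟪x ω, Δ⟫ - η ω := fun ω => by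
    rw [hy, inner_sub_right]; ring
  have hx₂ : MemLp x 2 μ := hx.mono_exponent (by norm_num)
  have hmom : ∀ v, ∫ ω, ⟪x ω, v⟫ ^ 2 ∂μ ≤ C₁ * ‖v‖ ^ 2 := fun v =>
    (integral_inner_sq_le_opNorm hx₂ hA v).trans (by gcongr)
  have hpair : ∀ u, IndepFun (fun ω => (⟪x ω, Δ⟫, ⟪x ω, u⟫)) η μ := fun u =>
    hind.comp ((measurable_id.inner measurable_const).prodMk
      (measurable_id.inner measurable_const)) measurable_id
  have hS : ∫ ω, (y ω - ⟪x ω, w⟫) ^ 2 ∂μ = ∫ ω, ⟪x ω, Δ⟫ ^ 2 ∂μ + ∫ ω, η ω ^ 2 ∂μ := by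
    rw [← integral_sub_sq_of_indepFun (hx₂.inner_const Δ) hη
      ((hpair 0).comp measurable_fst measurable_id) hη0]
    congr with ω
    rw [← hr]; ring
  have hint : Integrable (fun ω => clipGrad x y w κ ω - (⟪x ω, w⟫ - y ω) • x ω) μ :=
    hint₁.sub hint₂
  have hdir : ∀ u, ‖innerSL ℝ (∫ ω, (clipGrad x y w κ ω - (⟪x ω, w⟫ - y ω) • x ω) ∂μ) u‖ ≤
      ε * ‖Δ‖ * ‖u‖ := fun u => by
    rw [innerSL_apply_apply, real_inner_comm, ← integral_inner hint, Real.norm_eq_abs]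
    simp_rw [clipGrad_sub_smul_eq, real_inner_smul_right, hr, real_inner_comm _ u]
    refine (abs_integral_clipError_mul_le (by linarith) hκpos (hx.inner_const Δ)
      (hx.inner_const u) hη (hpair u) hηsym (hyper Δ) (hyper u)).trans
      (mul_sqrt_mul_div_sq_le hC ((norm_nonneg _).trans hAn)
      (integral_nonneg fun ω => sq_nonneg _) (integral_nonneg fun ω => sq_nonneg _)
      (integral_nonneg fun ω => sq_nonneg _) hκpos
      (norm_nonneg _) (norm_nonneg _) (hmom Δ) (hmom u) ?_)
    rw [hS, div_le_iff₀ hε] at hκ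
    linarith
  calc _ = ‖innerSL ℝ (∫ ω, (clipGrad x y w κ ω - (⟪x ω, w⟫ - y ω) • x ω) ∂μ)‖ :=
        (innerSL_apply_norm _ _).symm
    _ ≤ ε * ‖Δ‖ := (innerSL ℝ _).opNorm_le_bound (by positivity) hdir

/-- Under L4-L2 hypercontractivity, `‖Σ₀‖ ≤ C₁`, `y = w₀·x + η` with `η`
independent of `x`, mean zero and symmetric, if `κ² ≥ 8CC₁E[(y − x·w)²]/ε` then the bias of
clipping is small: `‖E[clip((x·w − y))·x − (x·w − y)x]‖ ≤ ε‖w − w₀‖`. -/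
theorem clipGrad_bias {Ω : Type*} [MeasurableSpace Ω] (μ : Measure Ω)
    [IsProbabilityMeasure μ] {d : ℕ}
    (x : Ω → EuclideanSpace ℝ (Fin d)) (η : Ω → ℝ) (y : Ω → ℝ)
    (hx : MemLp x 4 μ) (hη : MemLp η 2 μ)
    (hind : IndepFun x η μ)
    (hη0 : ∫ ω, η ω ∂μ = 0)
    (hηsym : Measure.map η μ = Measure.map (fun ω => -η ω) μ)
    (w₀ w : EuclideanSpace ℝ (Fin d))
    (hy : ∀ ω, y ω = ⟪x ω, w₀⟫ + η ω)
    (A : Matrix (Fin d) (Fin d) ℝ)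
    (hA : ∀ i j, ∫ ω, x ω i * x ω j ∂μ = A i j)
    (C C₁ : ℝ) (hC : 1 ≤ C) (hC₁ : 1 ≤ C₁) (hAn : opNorm A ≤ C₁)
    (hyper : ∀ u : EuclideanSpace ℝ (Fin d),
      ∫ ω, ⟪x ω, u⟫ ^ 4 ∂μ ≤ C * (∫ ω, ⟪x ω, u⟫ ^ 2 ∂μ) ^ 2)
    (κ ε : ℝ) (hκpos : 0 < κ) (hε : 0 < ε)
    (hκ : 8 * C * C₁ * (∫ ω, (y ω - ⟪x ω, w⟫) ^ 2 ∂μ) / ε ≤ κ ^ 2)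
    (hint₁ : Integrable (clipGrad x y w κ) μ)
    (hint₂ : Integrable (fun ω => (⟪x ω, w⟫ - y ω) • x ω) μ) :
    ‖∫ ω, (clipGrad x y w κ ω - (⟪x ω, w⟫ - y ω) • x ω) ∂μ‖ ≤ ε * ‖w - w₀‖ :=
  clipGrad_bias_general μ x η y hx hη hind hη0 hηsym w₀ w hy A hA C C₁ hC hAn hyper κ ε hκpos hε hκ
    hint₁ hint₂
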